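/- For any invertible diagonal matrix T ∈ ℝ^{L×L} and any subspace V ⊆ ℝ^L, the alignment width does not increase under extension or contraction: Δ_T(e_T V) ≤ Δ_T V and Δ_T(c_T V) ≤ Δ_T V. Consequently, for all n ≥ 0, dim(e_T^n V) ≤ dim V + n·Δ_T V and dim(c_T^n V) ≥ dim V − n·Δ_T V. -/

import Mathlib

open Matrix Submodule Module

/-- The extension of a subspace `V` under a matrix `A`: `e_A V = V + A V`. -/
noncomputable def extT {n : Type*} [Fintype n] [DecidableEq n] (A : Matrix n n ℝ)
    (V : Submodule ℝ (n → ℝ)) : Submodule ℝ (n → ℝ) :=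
  V ⊔ V.map (Matrix.toLin' A)

/-- The contraction of a subspace `V` under a matrix `A`: `c_A V = V ∩ A V`. -/
noncomputable def conT {n : Type*} [Fintype n] [DecidableEq n] (A : Matrix n n ℝ)
    (V : Submodule ℝ (n → ℝ)) : Submodule ℝ (n → ℝ) :=
  V ⊓ V.map (Matrix.toLin' A)

/-- The iterated extension `e_A^m V = V + A V + ⋯ + A^m V`. -/
noncomputable def extIter {n : Type*} [Fintype n] [DecidableEq n] (A : Matrix n n ℝ)
    (m : ℕ) (V : Submodule ℝ (n → ℝ)) : Submodule ℝ (n → ℝ) :=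
  ⨆ k ∈ Finset.range (m + 1), V.map (Matrix.toLin' (A ^ k))

/-- The iterated contraction `c_A^m V = V ∩ A V ∩ ⋯ ∩ A^m V`. -/
noncomputable def conIter {n : Type*} [Fintype n] [DecidableEq n] (A : Matrix n n ℝ)
    (m : ℕ) (V : Submodule ℝ (n → ℝ)) : Submodule ℝ (n → ℝ) :=
  ⨅ k ∈ Finset.range (m + 1), V.map (Matrix.toLin' (A ^ k))

/-- The alignment width `Δ_A V = dim(e_A V) − dim V`. -/
noncomputable def widthT {n : Type*} [Fintype n] [DecidableEq n] (A : Matrix n n ℝ)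
    (V : Submodule ℝ (n → ℝ)) : ℕ :=
  finrank ℝ ↥(extT A V) - finrank ℝ ↥V

section Aux

variable {n : Type*} [Fintype n] [DecidableEq n] (A : Matrix n n ℝ)

local notation "EQV" => ((n → ℝ) ≃ₗ[ℝ] (n → ℝ))

lemma frk_map (e : EQV) (hA : Matrix.toLin' A = ↑e) (W : Submodule ℝ (n → ℝ)) :
    finrank ℝ (W.map (Matrix.toLin' A)) = finrank ℝ W := by
  rw [hA]; exact LinearEquiv.finrank_map_eq e W

lemma width_eq (W : Submodule ℝ (n → ℝ)) :
    finrank ℝ (extT A W) = finrank ℝ W + widthT A W := by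
  have h : finrank ℝ W ≤ finrank ℝ (extT A W) := Submodule.finrank_mono le_sup_left
  unfold widthT; omega

lemma sup_inf (e : EQV) (hA : Matrix.toLin' A = ↑e) (W : Submodule ℝ (n → ℝ)) :
    finrank ℝ (extT A W) + finrank ℝ (conT A W) = finrank ℝ W + finrank ℝ W := by
  unfold extT conT
  rw [Submodule.finrank_sup_add_finrank_inf_eq, frk_map A e hA]

lemma inf_eq (e : EQV) (hA : Matrix.toLin' A = ↑e) (W : Submodule ℝ (n → ℝ)) :
    finrank ℝ (conT A W) + widthT A W = finrank ℝ W := by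
  have h1 := sup_inf A e hA W
  have h2 := width_eq A W
  omega

lemma width_ext_le (e : EQV) (hA : Matrix.toLin' A = ↑e) (W : Submodule ℝ (n → ℝ)) :
    widthT A (extT A W) ≤ widthT A W := by
  have h1 := sup_inf A e hA (extT A W)
  have h2 : finrank ℝ (W.map (Matrix.toLin' A)) ≤ finrank ℝ (conT A (extT A W)) :=
    Submodule.finrank_mono (show W.map (Matrix.toLin' A) ≤
      extT A W ⊓ (extT A W).map (Matrix.toLin' A) from
      le_inf le_sup_right (Submodule.map_mono le_sup_left))
  have h3 := frk_map A e hA W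
  have h4 := width_eq A W
  have h5 := width_eq A (extT A W)
  omega

lemma width_con_le (e : EQV) (hA : Matrix.toLin' A = ↑e) (W : Submodule ℝ (n → ℝ)) :
    widthT A (conT A W) ≤ widthT A W := by
  have h0 : finrank ℝ (extT A (conT A W)) ≤ finrank ℝ (W.map (Matrix.toLin' A)) :=
    Submodule.finrank_mono (show conT A W ⊔ (conT A W).map (Matrix.toLin' A) ≤
      W.map (Matrix.toLin' A) from
      sup_le inf_le_right (Submodule.map_mono inf_le_left))
  have h3 := frk_map A e hA W
  have h1 := width_eq A (conT A W)
  have h2 := inf_eq A e hA W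
  omega

lemma map_pow_succ (V : Submodule ℝ (n → ℝ)) (k : ℕ) :
    (V.map (Matrix.toLin' (A ^ k))).map (Matrix.toLin' A)
      = V.map (Matrix.toLin' (A ^ (k + 1))) := by
  rw [← Submodule.map_comp, ← Matrix.toLin'_mul, ← pow_succ']

lemma extIter_zero (V : Submodule ℝ (n → ℝ)) : extIter A 0 V = V := by
  simp [extIter, Matrix.toLin'_one, Module.End.one_eq_id, Submodule.map_id]

lemma conIter_zero (V : Submodule ℝ (n → ℝ)) : conIter A 0 V = V := by
  simp [conIter, Matrix.toLin'_one, Module.End.one_eq_id, Submodule.map_id]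

lemma extIter_map (V : Submodule ℝ (n → ℝ)) (m : ℕ) :
    (extIter A m V).map (Matrix.toLin' A)
      = ⨆ k ∈ Finset.range (m + 1), V.map (Matrix.toLin' (A ^ (k + 1))) := by
  simp only [extIter, Submodule.map_iSup, map_pow_succ A]

lemma conIter_map (e : EQV) (hA : Matrix.toLin' A = ↑e) (V : Submodule ℝ (n → ℝ)) (m : ℕ) :
    (conIter A m V).map (Matrix.toLin' A)
      = ⨅ k ∈ Finset.range (m + 1), V.map (Matrix.toLin' (A ^ (k + 1))) := by
  rw [hA, Submodule.map_equiv_eq_comap_symm, conIter, Submodule.comap_iInf]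
  refine iInf_congr fun k => ?_
  rw [Submodule.comap_iInf]
  refine iInf_congr fun hk => ?_
  rw [← Submodule.map_equiv_eq_comap_symm, ← hA, map_pow_succ]

lemma extIter_succ (V : Submodule ℝ (n → ℝ)) (m : ℕ) :
    extIter A (m + 1) V = extT A (extIter A m V) := by
  have hmap := extIter_map A V m
  refine le_antisymm (iSup₂_le fun k hk => ?_) (sup_le (iSup₂_le fun k hk => ?_) ?_)
  · rw [Finset.mem_range] at hk
    rcases Nat.lt_succ_iff_lt_or_eq.mp hk with h | h
    · exact le_trans (le_iSup₂ (f := fun k _ => V.map (Matrix.toLin' (A ^ k))) k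
        (Finset.mem_range.mpr h)) le_sup_left
    · subst h
      refine le_trans ?_ (le_sup_right (a := extIter A m V))
      rw [hmap]
      exact le_iSup₂ (f := fun k _ => V.map (Matrix.toLin' (A ^ (k + 1)))) m
        (Finset.mem_range.mpr (Nat.lt_succ_self m))
  · rw [Finset.mem_range] at hk
    exact le_iSup₂ (f := fun k _ => V.map (Matrix.toLin' (A ^ k))) k
      (Finset.mem_range.mpr (hk.trans (Nat.lt_succ_self _)))
  · rw [hmap]
    refine iSup₂_le fun k hk => ?_
    rw [Finset.mem_range] at hk
    exact le_iSup₂ (f := fun k _ => V.map (Matrix.toLin' (A ^ k))) (k + 1)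
      (Finset.mem_range.mpr (Nat.succ_lt_succ hk))

lemma conIter_succ (e : EQV) (hA : Matrix.toLin' A = ↑e) (V : Submodule ℝ (n → ℝ)) (m : ℕ) :
    conIter A (m + 1) V = conT A (conIter A m V) := by
  have hmap := conIter_map A e hA V m
  refine le_antisymm (le_inf (le_iInf₂ fun k hk => ?_) ?_) (le_iInf₂ fun k hk => ?_)
  · rw [Finset.mem_range] at hk
    exact iInf₂_le (f := fun k _ => V.map (Matrix.toLin' (A ^ k))) k
      (Finset.mem_range.mpr (hk.trans (Nat.lt_succ_self _)))
  · rw [hmap]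
    refine le_iInf₂ fun k hk => ?_
    rw [Finset.mem_range] at hk
    exact iInf₂_le (f := fun k _ => V.map (Matrix.toLin' (A ^ k))) (k + 1)
      (Finset.mem_range.mpr (Nat.succ_lt_succ hk))
  · rw [Finset.mem_range] at hk
    rcases Nat.lt_succ_iff_lt_or_eq.mp hk with h | h
    · exact le_trans inf_le_left (iInf₂_le (f := fun k _ => V.map (Matrix.toLin' (A ^ k))) k
        (Finset.mem_range.mpr h))
    · subst h
      refine le_trans (inf_le_right (a := conIter A m V)) ?_
      rw [hmap]
      exact iInf₂_le (f := fun k _ => V.map (Matrix.toLin' (A ^ (k + 1)))) m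
        (Finset.mem_range.mpr (Nat.lt_succ_self m))

lemma width_extIter_le (e : EQV) (hA : Matrix.toLin' A = ↑e) (V : Submodule ℝ (n → ℝ)) (m : ℕ) :
    widthT A (extIter A m V) ≤ widthT A V := by
  induction m with
  | zero => rw [extIter_zero]
  | succ m ih => rw [extIter_succ]; exact le_trans (width_ext_le A e hA _) ih

lemma width_conIter_le (e : EQV) (hA : Matrix.toLin' A = ↑e) (V : Submodule ℝ (n → ℝ)) (m : ℕ) :
    widthT A (conIter A m V) ≤ widthT A V := by
  induction m with
  | zero => rw [conIter_zero]
  | succ m ih => rw [conIter_succ A e hA]; exact le_trans (width_con_le A e hA _) ih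

end Aux

/-- For an invertible diagonal matrix `T` the alignment width does not increase under
extension or contraction: `Δ_T(e_T V) ≤ Δ_T V` and `Δ_T(c_T V) ≤ Δ_T V`; consequently
`dim(e_T^m V) ≤ dim V + m·Δ_T V` and `dim(c_T^m V) ≥ dim V − m·Δ_T V` for all `m`. -/
theorem stmt6 (L : ℕ) (d : Fin L → ℝ) (hd : ∀ ℓ, d ℓ ≠ 0)
    (V : Submodule ℝ (Fin L → ℝ)) :
    widthT (Matrix.diagonal d) (extT (Matrix.diagonal d) V) ≤ widthT (Matrix.diagonal d) V ∧
    widthT (Matrix.diagonal d) (conT (Matrix.diagonal d) V) ≤ widthT (Matrix.diagonal d) V ∧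
    (∀ m : ℕ,
      finrank ℝ ↥(extIter (Matrix.diagonal d) m V) ≤
        finrank ℝ ↥V + m * widthT (Matrix.diagonal d) V ∧
      finrank ℝ ↥V ≤
        finrank ℝ ↥(conIter (Matrix.diagonal d) m V) + m * widthT (Matrix.diagonal d) V) := by
  have h1 : (Matrix.toLin' (Matrix.diagonal d)).comp
      (Matrix.toLin' (Matrix.diagonal fun ℓ => (d ℓ)⁻¹)) = LinearMap.id := by
    rw [← Matrix.toLin'_mul, Matrix.diagonal_mul_diagonal,
      show (fun i => d i * (d i)⁻¹) = fun _ : Fin L => (1 : ℝ) from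
        funext fun ℓ => mul_inv_cancel₀ (hd ℓ),
      Matrix.diagonal_one, Matrix.toLin'_one]
  have h2 : (Matrix.toLin' (Matrix.diagonal fun ℓ => (d ℓ)⁻¹)).comp
      (Matrix.toLin' (Matrix.diagonal d)) = LinearMap.id := by
    rw [← Matrix.toLin'_mul, Matrix.diagonal_mul_diagonal,
      show (fun i => (d i)⁻¹ * d i) = fun _ : Fin L => (1 : ℝ) from
        funext fun ℓ => inv_mul_cancel₀ (hd ℓ),
      Matrix.diagonal_one, Matrix.toLin'_one]
  set A := Matrix.diagonal d with hAdef
  let e : (Fin L → ℝ) ≃ₗ[ℝ] (Fin L → ℝ) := LinearEquiv.ofLinear _ _ h1 h2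
  have hA : Matrix.toLin' A = ↑e := rfl
  refine ⟨width_ext_le A e hA V, width_con_le A e hA V, fun m => ?_⟩
  induction m with
  | zero => rw [extIter_zero, conIter_zero]; simp
  | succ m ih =>
    obtain ⟨ih1, ih2⟩ := ih
    constructor
    · rw [extIter_succ, Nat.succ_mul]
      have e1 := width_eq A (extIter A m V)
      have e2 := width_extIter_le A e hA V m
      linarith
    · rw [conIter_succ A e hA, Nat.succ_mul]
      have e1 := inf_eq A e hA (conIter A m V)
      have e2 := width_conIter_le A e hA V m
      linarith
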